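/- arXiv:1310.8563 — 2 statements merged into one kernel-verified Lean document; each statement's English description precedes it below -/
import Mathlib

section
/- Let $V_1,\dots,V_m$ and $V$ be vector spaces over a field $K$, and let $f: V_1 \times \cdots \times V_m \to V$ be a multilinear map (linear in each argument separately). If there exist two points in the image of $f$ that are not proportional (neither is a scalar multiple of the other), then the image of $f$ contains a 2-dimensional linear subspace of $V$. -/
universe u

private lemma smul_rel {K : Type*} [Field K] {W : Type*} [AddCommGroup W] [Module K W]
    {s t : K} {a b : W} (hs : s ≠ 0) (h : s • a + t • b = 0) : a = (-t / s) • b := by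
  have h1 : s • a = (-t) • b := by
    rw [neg_smul]; exact eq_neg_of_add_eq_zero_left h
  calc a = (s⁻¹ * s) • a := by rw [inv_mul_cancel₀ hs, one_smul]
    _ = s⁻¹ • (s • a) := by rw [mul_smul]
    _ = s⁻¹ • ((-t) • b) := by rw [h1]
    _ = (-t / s) • b := by rw [smul_smul, div_eq_mul_inv, mul_comm]

private lemma aux_dep_zero {K : Type*} [Field K] {W : Type*} [AddCommGroup W] [Module K W]
    {v₁ v₂ u : W} (hind : LinearIndependent K ![v₁, v₂])
    (h1 : ¬ LinearIndependent K ![v₁, u]) (h2 : ¬ LinearIndependent K ![u, v₂]) :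
    u = 0 := by
  by_contra hu
  rw [LinearIndependent.pair_iff] at h1 h2
  push_neg at h1 h2
  obtain ⟨s, t, hst, hst'⟩ := h1
  obtain ⟨s', t', hst2, hst2'⟩ := h2
  have hs : s ≠ 0 := by
    rintro rfl
    simp only [zero_smul, zero_add] at hst
    rcases smul_eq_zero.1 hst with h | h
    · exact hst' rfl h
    · exact hu h
  have ht' : t' ≠ 0 := by
    rintro rfl
    simp only [zero_smul, add_zero] at hst2
    rcases smul_eq_zero.1 hst2 with h | h
    · exact hst2' h rfl
    · exact hu h
  have hv1 : v₁ = (-t / s) • u := smul_rel hs hst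
  have hv2 : v₂ = (-s' / t') • u := by
    have : t' • v₂ + s' • u = 0 := by rw [add_comm]; exact hst2
    exact smul_rel ht' this
  have hv₁ne : v₁ ≠ 0 := by
    have := hind.ne_zero 0
    simpa using this
  have hc1 : (-t / s) ≠ 0 := by
    intro h
    exact hv₁ne (by rw [hv1, h, zero_smul])
  have key : (-s' / t') • v₁ + (-(-t / s)) • v₂ = 0 := by
    rw [hv1, hv2, smul_smul, smul_smul, ← add_smul,
      show -s' / t' * (-t / s) + -(-t / s) * (-s' / t') = 0 by ring, zero_smul]
  have := (LinearIndependent.pair_iff.1 hind _ _ key).2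
  rw [neg_eq_zero] at this
  exact hc1 this

private lemma aux_multi {K : Type*} [Field K] {W : Type*} [AddCommGroup W] [Module K W] :
    ∀ (m : ℕ) (V : Fin m → Type u) [inst : ∀ i, AddCommGroup (V i)]
      [inst2 : ∀ i, Module K (V i)]
      (f : MultilinearMap K V W) (x y : ∀ i, V i),
      LinearIndependent K ![f x, f y] →
      ∃ w₁ w₂ : W, LinearIndependent K ![w₁, w₂] ∧
        ∀ a b : K, a • w₁ + b • w₂ ∈ Set.range ⇑f := by
  intro m
  induction m with
  | zero =>
    intro V _ _ f x y hind
    exfalso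
    have hxy : x = y := Subsingleton.elim x y
    have := (LinearIndependent.pair_iff.1 hind 1 (-1) (by rw [hxy]; simp)).1
    exact one_ne_zero this
  | succ m ih =>
    intro V _ _ f x y hind
    set v₁ := f x with hv₁
    set v₂ := f y with hv₂
    have hx : f (Fin.cons (x 0) (Fin.tail x)) = v₁ := by rw [Fin.cons_self_tail]
    have hy : f (Fin.cons (y 0) (Fin.tail y)) = v₂ := by rw [Fin.cons_self_tail]
    set u := f (Fin.cons (x 0) (Fin.tail y)) with hu
    set u' := f (Fin.cons (y 0) (Fin.tail x)) with hu'
    by_cases hc1 : LinearIndependent K ![u, v₂]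
    · -- plane via linearity in slot 0 over tail y
      refine ⟨u, v₂, hc1, fun a b => ?_⟩
      refine ⟨Fin.cons (a • x 0 + b • y 0) (Fin.tail y), ?_⟩
      rw [f.cons_add, f.cons_smul, f.cons_smul, hy]
    · by_cases hc2 : LinearIndependent K ![v₁, u]
      · -- IH on the curried map at x 0
        obtain ⟨w₁, w₂, hw, hmem⟩ := ih (fun i => V i.succ) (f.curryLeft (x 0))
          (Fin.tail x) (Fin.tail y) (by
            simpa only [MultilinearMap.curryLeft_apply, hx] using hc2)
        refine ⟨w₁, w₂, hw, fun a b => ?_⟩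
        obtain ⟨z, hz⟩ := hmem a b
        exact ⟨Fin.cons (x 0) z, by rw [← f.curryLeft_apply, hz]⟩
      · have hu0 : u = 0 := aux_dep_zero hind hc2 hc1
        by_cases hc3 : LinearIndependent K ![v₁, u']
        · refine ⟨v₁, u', hc3, fun a b => ?_⟩
          refine ⟨Fin.cons (a • x 0 + b • y 0) (Fin.tail x), ?_⟩
          rw [f.cons_add, f.cons_smul, f.cons_smul, hx]
        · by_cases hc4 : LinearIndependent K ![u', v₂]
          · obtain ⟨w₁, w₂, hw, hmem⟩ := ih (fun i => V i.succ) (f.curryLeft (y 0))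
              (Fin.tail x) (Fin.tail y) (by
                simpa only [MultilinearMap.curryLeft_apply, hy] using hc4)
            refine ⟨w₁, w₂, hw, fun a b => ?_⟩
            obtain ⟨z, hz⟩ := hmem a b
            exact ⟨Fin.cons (y 0) z, by rw [← f.curryLeft_apply, hz]⟩
          · have hu'0 : u' = 0 := aux_dep_zero hind hc3 hc4
            -- use curried map at x 0 + y 0
            obtain ⟨w₁, w₂, hw, hmem⟩ := ih (fun i => V i.succ) (f.curryLeft (x 0 + y 0))
              (Fin.tail x) (Fin.tail y) (by
                have e1 : f.curryLeft (x 0 + y 0) (Fin.tail x) = v₁ := by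
                  rw [MultilinearMap.curryLeft_apply, f.cons_add, hx, ← hu', hu'0, add_zero]
                have e2 : f.curryLeft (x 0 + y 0) (Fin.tail y) = v₂ := by
                  rw [MultilinearMap.curryLeft_apply, f.cons_add, ← hu, hy, hu0, zero_add]
                rw [e1, e2]; exact hind)
            refine ⟨w₁, w₂, hw, fun a b => ?_⟩
            obtain ⟨z, hz⟩ := hmem a b
            exact ⟨Fin.cons (x 0 + y 0) z, by rw [← f.curryLeft_apply, hz]⟩

theorem stmt_0 {K : Type*} [Field K] {m : ℕ} {V : Fin m → Type*} {W : Type*}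
    [∀ i, AddCommGroup (V i)] [∀ i, Module K (V i)] [AddCommGroup W] [Module K W]
    (f : MultilinearMap K V W) (v₁ v₂ : W)
    (hv₁ : v₁ ∈ Set.range ⇑f) (hv₂ : v₂ ∈ Set.range ⇑f)
    (h₁ : ¬ ∃ c : K, v₁ = c • v₂) (h₂ : ¬ ∃ c : K, v₂ = c • v₁) :
    ∃ w₁ w₂ : W, LinearIndependent K ![w₁, w₂] ∧
      ∀ a b : K, a • w₁ + b • w₂ ∈ Set.range ⇑f := by
  obtain ⟨x, hx⟩ := hv₁
  obtain ⟨y, hy⟩ := hv₂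
  have hind : LinearIndependent K ![f x, f y] := by
    rw [hx, hy, LinearIndependent.pair_iff]
    intro s t hst
    by_cases hs : s = 0
    · subst hs
      simp only [zero_smul, zero_add] at hst
      rcases smul_eq_zero.1 hst with h | h
      · exact ⟨rfl, h⟩
      · exact absurd ⟨0, by rw [h, zero_smul]⟩ h₂
    · exfalso
      apply h₁
      exact ⟨-t / s, smul_rel hs hst⟩
  exact aux_multi m V f x y hind
end

section
/- Let $V_1,\dots,V_m$ be vector spaces over a field $K$ and let $f: V_1 \times \cdots \times V_m \to V$ be a multilinear map into a 2-dimensional vector space $V$. If the image of $f$ contains two linearly independent vectors, then the image of $f$ is all of $V$. -/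
open Fin Module

-- A submodule of a 2-dimensional space containing two independent vectors is everything.
lemma aux_sub {K W : Type*} [Field K] [AddCommGroup W] [Module K W]
    (hW : Module.finrank K W = 2) (p : Submodule K W) (u v : W)
    (hu : u ∈ p) (hv : v ∈ p) (h : LinearIndependent K ![u, v]) : p = ⊤ := by
  have hfin : FiniteDimensional K W := by
    apply FiniteDimensional.of_finrank_pos; omega
  have hspan : Submodule.span K (Set.range ![u, v]) ≤ p := by
    rw [Submodule.span_le]
    rintro w ⟨i, rfl⟩
    fin_cases i <;> simpa
  have h2 : finrank K (Submodule.span K (Set.range ![u, v])) = 2 := by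
    rw [finrank_span_eq_card h]; simp
  apply Submodule.eq_top_of_finrank_eq
  have h1 := Submodule.finrank_le p
  have h3 := Submodule.finrank_mono hspan
  omega

lemma aux_dep {K W : Type*} [Field K] [AddCommGroup W] [Module K W]
    (u w : W) (hu : u ≠ 0) (h : ¬ LinearIndependent K ![u, w]) : ∃ c : K, w = c • u := by
  rw [LinearIndependent.pair_iff] at h
  push_neg at h
  obtain ⟨s, t, hst, hne⟩ := h
  rcases eq_or_ne t 0 with rfl | ht
  · have hs : s ≠ 0 := fun h => (hne h) rfl
    rw [zero_smul, add_zero] at hst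
    exact absurd ((smul_eq_zero.mp hst).resolve_left hs) hu
  · refine ⟨-(t⁻¹ * s), ?_⟩
    have : t • w = -(s • u) := by
      rw [eq_neg_iff_add_eq_zero, add_comm]; exact hst
    rw [neg_smul, mul_smul, ← smul_neg, ← this, smul_smul, inv_mul_cancel₀ ht, one_smul]

lemma aux_ne {K W : Type*} [Field K] [AddCommGroup W] [Module K W]
    {u v : W} (h : LinearIndependent K ![u, v]) : u ≠ 0 := by
  have := h.ne_zero 0; simpa using this

-- main induction
lemma aux_main {K : Type*} [Field K] {W : Type u_w} [AddCommGroup W] [Module K W]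
    (hW : Module.finrank K W = 2) :
    ∀ (m : ℕ) (V : Fin (m+1) → Type u_v) (_ : ∀ i, AddCommGroup (V i))
      (_ : ∀ i, Module K (V i)) (f : MultilinearMap K V W) (x y : ∀ i, V i),
      LinearIndependent K ![f x, f y] → Set.range ⇑f = Set.univ := by
  intro m
  induction m with
  | zero =>
    intro V _ _ f x y hli
    have key : Set.range ⇑(f.toLinearMap x 0) ⊆ Set.range ⇑f := by
      rintro w ⟨c, rfl⟩; exact ⟨_, rfl⟩
    have hx : f.toLinearMap x 0 (x 0) = f x := by
      simp [MultilinearMap.toLinearMap]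
    have hy : f.toLinearMap x 0 (y 0) = f y := by
      have : Function.update x 0 (y 0) = y := by
        funext i
        fin_cases i; simp
      simp [MultilinearMap.toLinearMap, this]
    have := aux_sub hW (LinearMap.range (f.toLinearMap x 0)) (f x) (f y)
      ⟨x 0, hx⟩ ⟨y 0, hy⟩ hli
    apply Set.eq_univ_of_univ_subset
    refine subset_trans ?_ key
    intro w _
    exact (this ▸ Submodule.mem_top : w ∈ LinearMap.range (f.toLinearMap x 0))
  | succ k ih =>
    intro V _ _ f x y hli
    set u := f x with hu
    set v := f y with hv
    have hu0 : u ≠ 0 := aux_ne hli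
    have hcons : ∀ (c : V 0) (z : ∀ i, V i), f (cons c (tail z)) = f (Function.update z 0 c) := by
      intro c z
      congr 1
      funext i
      refine Fin.cases ?_ ?_ i
      · simp
      · intro j; simp [tail, Function.update_of_ne (Fin.succ_ne_zero j)]
    have hsub : ∀ c : V 0, Set.range ⇑(f.curryLeft c) ⊆ Set.range ⇑f := by
      rintro c w ⟨z, rfl⟩
      exact ⟨cons c z, by simp [MultilinearMap.curryLeft_apply]⟩
    have hIH : ∀ (c : V 0) (z z' : ∀ i : Fin (k+1), V i.succ),
        LinearIndependent K ![f (cons c z), f (cons c z')] → Set.range ⇑f = Set.univ := by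
      intro c z z' h
      apply Set.eq_univ_of_univ_subset
      refine subset_trans ?_ (hsub c)
      rw [ih _ _ _ (f.curryLeft c) z z' (by simpa [MultilinearMap.curryLeft_apply] using h)]
    set u' := f (Function.update x 0 (y 0)) with hu'
    by_cases h1 : LinearIndependent K ![u, u']
    · have key : Set.range ⇑(f.toLinearMap x 0) ⊆ Set.range ⇑f := by
        rintro w ⟨c, rfl⟩; exact ⟨_, rfl⟩
      have hx : f.toLinearMap x 0 (x 0) = u := by simp [MultilinearMap.toLinearMap, hu]
      have hy' : f.toLinearMap x 0 (y 0) = u' := by simp [MultilinearMap.toLinearMap, hu']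
      have := aux_sub hW (LinearMap.range (f.toLinearMap x 0)) u u'
        ⟨x 0, hx⟩ ⟨y 0, hy'⟩ h1
      apply Set.eq_univ_of_univ_subset
      refine subset_trans ?_ key
      intro w _
      exact (this ▸ Submodule.mem_top : w ∈ LinearMap.range (f.toLinearMap x 0))
    · obtain ⟨lam, hlam⟩ := aux_dep u u' hu0 h1
      by_cases h2 : u' = 0
      · set w := f (Function.update y 0 (x 0)) with hw
        have e1 : f (cons (x 0 + y 0) (tail x)) = u := by
          rw [hcons, f.map_update_add]
          have : Function.update x 0 (x 0) = x := by simp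
          rw [this, ← hu', h2, add_zero, hu]
        have e2 : f (cons (x 0 + y 0) (tail y)) = w + v := by
          rw [hcons, f.map_update_add]
          have : Function.update y 0 (y 0) = y := by simp
          rw [this, ← hv, hw]
        by_cases h3 : LinearIndependent K ![u, w + v]
        · exact hIH (x 0 + y 0) (tail x) (tail y) (by rw [e1, e2]; exact h3)
        · obtain ⟨mu, hmu⟩ := aux_dep u (w + v) hu0 h3
          have hwval : w = mu • u - v := by rw [eq_sub_iff_add_eq, hmu]
          have e3 : f (cons (x 0) (tail x)) = u := by
            rw [hcons]; simp [hu]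
          have e4 : f (cons (x 0) (tail y)) = mu • u - v := by
            rw [hcons, ← hw, hwval]
          refine hIH (x 0) (tail x) (tail y) ?_
          rw [e3, e4, LinearIndependent.pair_iff]
          intro s t hst
          have : (s + t * mu) • u + (-t) • v = 0 := by
            rw [← hst, add_smul, mul_smul, neg_smul]
            rw [smul_sub]
            abel
          obtain ⟨hA, hB⟩ := (LinearIndependent.pair_iff.mp hli) _ _ this
          have ht : t = 0 := by simpa using hB
          constructor
          · rw [ht, zero_mul, add_zero] at hA; exact hA
          · exact ht
      · have hlam0 : lam ≠ 0 := by rintro rfl; simp [hlam] at h2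
        have hind : LinearIndependent K ![u', v] := by
          rw [LinearIndependent.pair_iff]
          intro s t hst
          rw [hlam, smul_smul] at hst
          obtain ⟨hA, hB⟩ := (LinearIndependent.pair_iff.mp hli) _ _ hst
          exact ⟨(mul_eq_zero.mp hA).resolve_right hlam0, hB⟩
        have e1 : f (cons (y 0) (tail x)) = u' := by rw [hcons, hu']
        have e2 : f (cons (y 0) (tail y)) = v := by
          rw [hcons]; simp [hv]
        exact hIH (y 0) (tail x) (tail y) (by rw [e1, e2]; exact hind)

theorem stmt_1 {K : Type*} [Field K] {m : ℕ} {V : Fin m → Type*} {W : Type*}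
    [∀ i, AddCommGroup (V i)] [∀ i, Module K (V i)] [AddCommGroup W] [Module K W]
    (hW : Module.finrank K W = 2)
    (f : MultilinearMap K V W) (v₁ v₂ : W)
    (hv₁ : v₁ ∈ Set.range ⇑f) (hv₂ : v₂ ∈ Set.range ⇑f)
    (hli : LinearIndependent K ![v₁, v₂]) :
    Set.range ⇑f = Set.univ := by
  obtain ⟨x, hx⟩ := hv₁
  obtain ⟨y, hy⟩ := hv₂
  cases m with
  | zero =>
    exfalso
    have hxy : x = y := by funext i; exact i.elim0
    rw [← hx, ← hy, hxy] at hli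
    have := (LinearIndependent.pair_iff.mp hli) 1 (-1) (by simp)
    simpa using this.1
  | succ k =>
    exact aux_main hW k V _ _ f x y (by rw [hx, hy]; exact hli)
end
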